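/- The function $z \mapsto \|z\|_{\mathsf{X}} := \max_{\sigma \in \mathbb{R}} \left(|z_1 e^{i\sigma} + \bar{z_4}| + |z_2 e^{i\sigma} + \bar{z_3}|\right)$ defines a norm on $\mathbb{C}^4$. -/

import Mathlib

open Complex Real

noncomputable def Xfun (z : Fin 4 → ℂ) (σ : ℝ) : ℝ :=
  ‖z 0 * Complex.exp (σ * Complex.I) + (starRingEnd ℂ) (z 3)‖ +
  ‖z 1 * Complex.exp (σ * Complex.I) + (starRingEnd ℂ) (z 2)‖

noncomputable def Xnorm (z : Fin 4 → ℂ) : ℝ := ⨆ σ : ℝ, Xfun z σ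

noncomputable def phase (z : Fin 4 → ℂ) : ℝ :=
  (Complex.arg (z 0) + Complex.arg (z 3)) - (Complex.arg (z 1) + Complex.arg (z 2))

/-!
`Xfun z` is continuous and `2π`-periodic, so it attains its supremum. Writing
`a = ‖a‖ e^{iθ}`, one has `a w e^{iσ} + conj (a u) = conj a (w e^{i(σ + 2θ)} + conj u)`, so scaling
by `a` multiplies `Xfun z` by `‖a‖` and shifts it by `2θ`, which leaves the supremum unchanged.
The triangle inequality holds pointwise in `σ`, and evaluating at `σ = 0` and `σ = π` separates
`z₁` from `conj z₄` and `z₂` from `conj z₃`.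
-/

open ComplexConjugate

namespace Complex

lemma eq_conj_mul_exp_two_arg_mul_I (c : ℂ) : c = conj c * exp (↑(2 * arg c) * I) := by
  have hpolar := norm_mul_exp_arg_mul_I c
  set θ := arg c
  rw [← hpolar, map_mul, conj_ofReal, ← exp_conj, map_mul, conj_ofReal, conj_I, mul_assoc,
    ← exp_add]
  push_cast
  ring_nf

lemma norm_mul_mul_exp_add_conj_mul (c a b : ℂ) (σ : ℝ) :
    ‖c * a * exp (σ * I) + conj (c * b)‖ = ‖c‖ * ‖a * exp (↑(σ + 2 * arg c) * I) + conj b‖ := by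
  have hfactor : c * a * exp (σ * I) + conj (c * b)
      = conj c * (a * exp (↑(σ + 2 * arg c) * I) + conj b) := by
    calc c * a * exp (σ * I) + conj (c * b)
        = conj c * exp (↑(2 * arg c) * I) * a * exp (σ * I) + conj c * conj b := by
          rw [← eq_conj_mul_exp_two_arg_mul_I, map_mul]
      _ = _ := by rw [ofReal_add, add_mul, exp_add]; ring
  rw [hfactor, norm_mul, RCLike.norm_conj]

lemma eq_zero_of_forall_mul_exp_add_eq_zero {a b : ℂ} (h : ∀ σ : ℝ, a * exp (σ * I) + b = 0) :
    a = 0 ∧ b = 0 := by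
  have h₀ := h 0
  have hπ := h π
  rw [ofReal_zero, zero_mul, exp_zero, mul_one] at h₀
  rw [exp_pi_mul_I, mul_neg_one] at hπ
  exact ⟨by linear_combination (h₀ - hπ) / 2, by linear_combination (h₀ + hπ) / 2⟩

end Complex

lemma continuous_Xfun (z : Fin 4 → ℂ) : Continuous (Xfun z) := by
  unfold Xfun
  fun_prop

lemma periodic_Xfun (z : Fin 4 → ℂ) : Function.Periodic (Xfun z) (2 * π) := by
  intro σ
  have hexp : exp (↑(σ + 2 * π) * I) = exp (σ * I) := by
    push_cast; exact exp_mul_I_periodic (σ : ℂ)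
  simp only [Xfun, hexp]

lemma Xfun_nonneg (z : Fin 4 → ℂ) (σ : ℝ) : 0 ≤ Xfun z σ := by
  unfold Xfun; positivity

lemma exists_isGreatest_Xfun (z : Fin 4 → ℂ) :
    ∃ σ : ℝ, IsGreatest (Set.range (Xfun z)) (Xfun z σ) := by
  obtain ⟨_, ⟨σ, rfl⟩, hσ⟩ := ((periodic_Xfun z).compact_of_continuous two_pi_pos.ne'
    (continuous_Xfun z)).exists_isGreatest (Set.range_nonempty _)
  exact ⟨σ, ⟨σ, rfl⟩, hσ⟩

lemma bddAbove_range_Xfun (z : Fin 4 → ℂ) : BddAbove (Set.range (Xfun z)) :=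
  let ⟨_, hσ⟩ := exists_isGreatest_Xfun z; hσ.bddAbove

lemma Xfun_le_Xnorm (z : Fin 4 → ℂ) (σ : ℝ) : Xfun z σ ≤ Xnorm z :=
  le_ciSup (bddAbove_range_Xfun z) σ

lemma Xfun_smul (a : ℂ) (z : Fin 4 → ℂ) (σ : ℝ) :
    Xfun (a • z) σ = ‖a‖ * Xfun z (σ + 2 * arg a) := by
  simp only [Xfun, Pi.smul_apply, smul_eq_mul, norm_mul_mul_exp_add_conj_mul, mul_add]

lemma Xfun_add_le (z w : Fin 4 → ℂ) (σ : ℝ) : Xfun (z + w) σ ≤ Xfun z σ + Xfun w σ := by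
  simp only [Xfun, Pi.add_apply, map_add, add_mul]
  rw [add_add_add_comm (z 0 * _), add_add_add_comm (z 1 * _)]
  exact (add_le_add (norm_add_le _ _) (norm_add_le _ _)).trans_eq (add_add_add_comm _ _ _ _)

lemma Xnorm_smul (a : ℂ) (z : Fin 4 → ℂ) : Xnorm (a • z) = ‖a‖ * Xnorm z := by
  simp only [Xnorm, Xfun_smul, Real.mul_iSup_of_nonneg (norm_nonneg a)]
  exact (Equiv.addRight (2 * arg a)).surjective.iSup_comp fun σ ↦ ‖a‖ * Xfun z σ

lemma Xnorm_add_le (z w : Fin 4 → ℂ) : Xnorm (z + w) ≤ Xnorm z + Xnorm w :=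
  ciSup_le fun σ ↦ (Xfun_add_le z w σ).trans (add_le_add (Xfun_le_Xnorm z σ) (Xfun_le_Xnorm w σ))

lemma eq_zero_of_forall_Xfun_eq_zero {z : Fin 4 → ℂ} (h : ∀ σ, Xfun z σ = 0) : z = 0 := by
  have hsplit σ := (add_eq_zero_iff_of_nonneg (norm_nonneg _) (norm_nonneg _)).1 (h σ)
  obtain ⟨h0, h3⟩ := eq_zero_of_forall_mul_exp_add_eq_zero fun σ ↦ norm_eq_zero.1 (hsplit σ).1
  obtain ⟨h1, h2⟩ := eq_zero_of_forall_mul_exp_add_eq_zero fun σ ↦ norm_eq_zero.1 (hsplit σ).2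
  rw [map_eq_zero] at h2 h3
  ext i
  fin_cases i <;> assumption

lemma Xnorm_eq_zero {z : Fin 4 → ℂ} : Xnorm z = 0 ↔ z = 0 := by
  refine ⟨fun h ↦ eq_zero_of_forall_Xfun_eq_zero fun σ ↦ ?_, ?_⟩
  · exact ((Xfun_le_Xnorm z σ).trans h.le).antisymm (Xfun_nonneg z σ)
  · rintro rfl
    simp [Xnorm, Xfun]

theorem stmt_3 :
    (∀ z : Fin 4 → ℂ, ∃ σ : ℝ, IsGreatest (Set.range (Xfun z)) (Xfun z σ) ∧ Xnorm z = Xfun z σ) ∧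
    (∀ (a : ℂ) (z : Fin 4 → ℂ), Xnorm (a • z) = ‖a‖ * Xnorm z) ∧
    (∀ z w : Fin 4 → ℂ, Xnorm (z + w) ≤ Xnorm z + Xnorm w) ∧
    (∀ z : Fin 4 → ℂ, Xnorm z = 0 ↔ z = 0) := by
  refine ⟨fun z ↦ ?_, Xnorm_smul, Xnorm_add_le, fun z ↦ Xnorm_eq_zero⟩
  obtain ⟨σ, hσ⟩ := exists_isGreatest_Xfun z
  exact ⟨σ, hσ, hσ.csSup_eq⟩
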